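/- For the energy harvesting two-hop channel with infinite batteries and α_1, α_2 ∈ [0,1]: the supremum of the sum-throughput Σ_{i=1}^{N} min{ (1/2)·log(1 + h_1 p_{1,i}/σ_2²), (1/2)·log(1 + h_2 p_{2,i}/σ_1²) } over all feasible policies equals its supremum over all feasible procrastinating policies. -/

import Mathlib

/-!
The throughput depends on the powers `p` only, so it suffices to show that for fixed powers every
feasible transfer schedule `d` can be replaced by a procrastinating one. This is done slot by slot,
left to right. If node 1 receives more in slot `k` than it spends, the part of the excess that it
passes straight back to node 2 is cancelled on both sides, which costs node 1 nothing and node 2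
nothing either because `α₁ α₂ ≤ 1`; node 2 delivers the rest one slot later. This lowers only node
1's battery at the end of slot `k`, which held at least that excess since its earlier battery and
harvest are nonnegative. The same step with the roles of the nodes exchanged fixes node 2.
-/

open Finset

namespace TwoHop

def PrefixNonneg (N : ℕ) (c : ℕ → ℝ) : Prop :=
  ∀ i < N, 0 ≤ ∑ n ∈ range (i + 1), c n

lemma PrefixNonneg.sum_range_nonneg {N k : ℕ} {c : ℕ → ℝ} (h : PrefixNonneg N c) (hk : k ≤ N) :
    0 ≤ ∑ n ∈ range k, c n := by
  cases k with
  | zero => simp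
  | succ k => exact h k hk

lemma PrefixNonneg.add_ite_add_ite {N k : ℕ} {c : ℕ → ℝ} {x y : ℝ} (h : PrefixNonneg N c)
    (hk : 0 ≤ ∑ n ∈ range (k + 1), c n + x) (hxy : 0 ≤ x + y) :
    PrefixNonneg N fun n => c n + (if n = k then x else 0) + (if n = k + 1 then y else 0) := by
  intro i hi
  simp only [sum_add_distrib, sum_ite_eq', mem_range]
  have hc := h i hi
  rcases lt_trichotomy i k with hik | rfl | hki
  · simpa [show ¬k < i + 1 by omega, show ¬k + 1 < i + 1 by omega] using hc
  · simpa using hk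
  · simp only [show k < i + 1 by omega, show k + 1 < i + 1 by omega, if_true]
    linarith

lemma PrefixNonneg.add_ite {N k : ℕ} {c : ℕ → ℝ} {x : ℝ} (h : PrefixNonneg N c) (hx : 0 ≤ x) :
    PrefixNonneg N fun n => c n + if n = k then x else 0 := by
  intro i hi
  simp only [sum_add_distrib, sum_ite_eq', mem_range]
  have hc := h i hi
  split_ifs <;> linarith

variable {N : ℕ} {E1 E2 p1 p2 d1 d2 : ℕ → ℝ} {a1 a2 : ℝ}

def Feasible (N : ℕ) (E1 E2 p1 p2 : ℕ → ℝ) (a1 a2 : ℝ) (d1 d2 : ℕ → ℝ) : Prop :=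
  (∀ i < N, 0 ≤ d1 i ∧ 0 ≤ d2 i) ∧
    PrefixNonneg N (fun n => E1 n - p1 n + a2 * d2 n - d1 n) ∧
    PrefixNonneg N (fun n => E2 n - p2 n + a1 * d1 n - d2 n)

lemma Feasible.swap (h : Feasible N E1 E2 p1 p2 a1 a2 d1 d2) :
    Feasible N E2 E1 p2 p1 a2 a1 d2 d1 :=
  ⟨fun i hi => (h.1 i hi).symm, h.2.2, h.2.1⟩

lemma Feasible.cancel_round_trip (h : Feasible N E1 E2 p1 p2 a1 a2 d1 d2) {k : ℕ} {u : ℝ}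
    (ha2 : 0 < a2) (ha : a1 * a2 ≤ 1) (hu0 : 0 ≤ u) (hu1 : u ≤ d1 k) (hu2 : u ≤ a2 * d2 k) :
    Feasible N E1 E2 p1 p2 a1 a2 (fun n => d1 n - if n = k then u else 0)
      (fun n => d2 n - if n = k then u / a2 else 0) := by
  obtain ⟨hd, h1, h2⟩ := h
  refine ⟨fun i hi => ⟨?_, ?_⟩, ?_, ?_⟩
  · dsimp only
    split_ifs with hik
    · rw [hik]
      linarith
    · simpa using (hd i hi).1
  · dsimp only
    split_ifs with hik
    · rw [hik, sub_nonneg, div_le_iff₀' ha2]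
      exact hu2
    · simpa using (hd i hi).2
  · convert h1 using 1
    funext n
    dsimp only
    split_ifs <;> field_simp <;> ring
  · have hau : a1 * u ≤ u / a2 := by
      rw [le_div_iff₀ ha2, mul_right_comm]
      exact mul_le_of_le_one_left hu0 ha
    convert h2.add_ite (k := k) (x := u / a2 - a1 * u) (by linarith) using 1
    funext n
    dsimp only
    split_ifs <;> ring

lemma Feasible.postpone_snd (h : Feasible N E1 E2 p1 p2 a1 a2 d1 d2) {k : ℕ} {v : ℝ}
    (hk : k < N) (hv0 : 0 ≤ v) (hv : v ≤ d2 k)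
    (hva : a2 * v ≤ E1 k - p1 k + a2 * d2 k - d1 k) :
    Feasible N E1 E2 p1 p2 a1 a2 d1
      (fun n => d2 n - (if n = k then v else 0) + if n = k + 1 then v else 0) := by
  obtain ⟨hd, h1, h2⟩ := h
  refine ⟨fun i hi => ⟨(hd i hi).1, ?_⟩, ?_, ?_⟩
  · have := (hd i hi).2
    dsimp only
    split_ifs <;> subst_vars <;> first | omega | linarith
  · have hb := h1.sum_range_nonneg hk.le
    convert h1.add_ite_add_ite (k := k) (x := -(a2 * v)) (y := a2 * v)
      (by rw [sum_range_succ]; linarith) (by linarith) using 1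
    funext n
    dsimp only
    split_ifs <;> first | omega | ring
  · convert h2.add_ite_add_ite (k := k) (x := v) (y := -v)
      (by linarith [h2 k hk]) (by linarith) using 1
    funext n
    dsimp only
    split_ifs <;> first | omega | ring

lemma Feasible.exists_fst_procrastinates_at (h : Feasible N E1 E2 p1 p2 a1 a2 d1 d2) {k : ℕ}
    (hk : k < N) (hE : 0 ≤ E1 k) (hp : 0 ≤ p1 k) (ha : a1 * a2 ≤ 1) :
    ∃ d1' d2', Feasible N E1 E2 p1 p2 a1 a2 d1' d2' ∧ (∀ n < k, d1' n = d1 n ∧ d2' n = d2 n) ∧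
      d1' k ≤ d1 k ∧ a2 * d2' k ≤ p1 k := by
  by_cases hex : a2 * d2 k ≤ p1 k
  · exact ⟨d1, d2, h, fun _ _ => ⟨rfl, rfl⟩, le_rfl, hex⟩
  push Not at hex
  obtain ⟨hd1, hd2⟩ := h.1 k hk
  have ha2 : 0 < a2 := by
    by_contra! ha2
    nlinarith
  set e := a2 * d2 k - p1 k
  rcases le_total e (d1 k) with hed | hde
  · refine ⟨_, _, h.cancel_round_trip ha2 ha (u := e) (by linarith) hed (by linarith),
      fun n hn => by simp [hn.ne], by simp; linarith, ?_⟩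
    simp only [if_true, mul_sub, mul_div_cancel₀ _ ha2.ne']
    linarith
  · have hc := h.cancel_round_trip ha2 ha hd1 le_rfl (by linarith)
    have hv0 : 0 ≤ (e - d1 k) / a2 := div_nonneg (by linarith) ha2.le
    have hv : (e - d1 k) / a2 ≤ d2 k - d1 k / a2 := by
      rw [div_le_iff₀ ha2, sub_mul, div_mul_cancel₀ _ ha2.ne']
      linarith
    refine ⟨_, _, hc.postpone_snd hk hv0 (by simpa using hv) ?_,
      fun n hn => by simp [hn.ne, show n ≠ k + 1 by omega], by simpa using hd1, ?_⟩
    · simp only [if_true, mul_sub, mul_div_cancel₀ _ ha2.ne']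
      linarith
    · simp only [if_true, show k ≠ k + 1 by omega, if_false, add_zero, mul_sub,
        mul_div_cancel₀ _ ha2.ne']
      linarith

lemma Feasible.exists_procrastinates_at (h : Feasible N E1 E2 p1 p2 a1 a2 d1 d2) {k : ℕ}
    (hk : k < N) (hE1 : 0 ≤ E1 k) (hE2 : 0 ≤ E2 k) (hp1 : 0 ≤ p1 k) (hp2 : 0 ≤ p2 k)
    (ha2 : 0 ≤ a2) (ha : a1 * a2 ≤ 1) :
    ∃ d1' d2', Feasible N E1 E2 p1 p2 a1 a2 d1' d2' ∧ (∀ n < k, d1' n = d1 n ∧ d2' n = d2 n) ∧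
      a2 * d2' k ≤ p1 k ∧ a1 * d1' k ≤ p2 k := by
  obtain ⟨e1, e2, he, hsame, -, hfst⟩ := h.exists_fst_procrastinates_at hk hE1 hp1 ha
  obtain ⟨f2, f1, hf, hsame', hf2, hsnd⟩ :=
    he.swap.exists_fst_procrastinates_at hk hE2 hp2 (by rwa [mul_comm])
  refine ⟨f1, f2, hf.swap, fun n hn => ⟨?_, ?_⟩, ?_, hsnd⟩
  · rw [(hsame' n hn).2, (hsame n hn).1]
  · rw [(hsame' n hn).1, (hsame n hn).2]
  · exact (mul_le_mul_of_nonneg_left hf2 ha2).trans hfst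

lemma Feasible.exists_procrastinating (h : Feasible N E1 E2 p1 p2 a1 a2 d1 d2)
    (hE : ∀ i < N, 0 ≤ E1 i ∧ 0 ≤ E2 i) (hp : ∀ i < N, 0 ≤ p1 i ∧ 0 ≤ p2 i)
    (ha2 : 0 ≤ a2) (ha : a1 * a2 ≤ 1) :
    ∃ d1' d2', Feasible N E1 E2 p1 p2 a1 a2 d1' d2' ∧
      ∀ i < N, a2 * d2' i ≤ p1 i ∧ a1 * d1' i ≤ p2 i := by
  suffices ∀ k ≤ N, ∃ d1' d2', Feasible N E1 E2 p1 p2 a1 a2 d1' d2' ∧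
      ∀ i < k, a2 * d2' i ≤ p1 i ∧ a1 * d1' i ≤ p2 i from this N le_rfl
  intro k hkN
  induction k with
  | zero => exact ⟨d1, d2, h, by simp⟩
  | succ k ih =>
    obtain ⟨e1, e2, he, hproc⟩ := ih (by omega)
    have hk : k < N := by omega
    obtain ⟨f1, f2, hf, hsame, hk1, hk2⟩ := he.exists_procrastinates_at hk (hE k hk).1
      (hE k hk).2 (hp k hk).1 (hp k hk).2 ha2 ha
    refine ⟨f1, f2, hf, fun i hi => ?_⟩
    rcases Nat.lt_succ_iff_lt_or_eq.mp hi with hi | rfl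
    · rw [(hsame i hi).1, (hsame i hi).2]
      exact hproc i hi
    · exact ⟨hk1, hk2⟩

end TwoHop

theorem stmt_16
    (N : ℕ) (E1 E2 : ℕ → ℝ) (h1 h2 s1 s2 a1 a2 : ℝ)
    (ha1 : a1 ∈ Set.Icc (0:ℝ) 1) (ha2 : a2 ∈ Set.Icc (0:ℝ) 1)
    (hE : ∀ i < N, 0 ≤ E1 i ∧ 0 ≤ E2 i) :
    sSup {t : ℝ | ∃ p1 p2 d1 d2 : ℕ → ℝ,
        (∀ i < N, 0 ≤ p1 i ∧ 0 ≤ p2 i ∧ 0 ≤ d1 i ∧ 0 ≤ d2 i) ∧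
        (∀ i < N,
          0 ≤ ∑ n ∈ Finset.range (i+1), (E1 n - p1 n + a2 * d2 n - d1 n) ∧
          0 ≤ ∑ n ∈ Finset.range (i+1), (E2 n - p2 n + a1 * d1 n - d2 n)) ∧
        t = ∑ i ∈ Finset.range N,
          min (1/2 * Real.log (1 + h1 * p1 i / s2))
              (1/2 * Real.log (1 + h2 * p2 i / s1))}
    = sSup {t : ℝ | ∃ p1 p2 d1 d2 : ℕ → ℝ,
        (∀ i < N, 0 ≤ p1 i ∧ 0 ≤ p2 i ∧ 0 ≤ d1 i ∧ 0 ≤ d2 i) ∧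
        (∀ i < N,
          0 ≤ ∑ n ∈ Finset.range (i+1), (E1 n - p1 n + a2 * d2 n - d1 n) ∧
          0 ≤ ∑ n ∈ Finset.range (i+1), (E2 n - p2 n + a1 * d1 n - d2 n)) ∧
        (∀ i < N, 0 ≤ p1 i - a2 * d2 i ∧ 0 ≤ p2 i - a1 * d1 i) ∧
        t = ∑ i ∈ Finset.range N,
          min (1/2 * Real.log (1 + h1 * p1 i / s2))
              (1/2 * Real.log (1 + h2 * p2 i / s1))} := by
  congr 1
  ext t
  constructor
  · rintro ⟨p1, p2, d1, d2, hnn, hfeas, rfl⟩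
    have hF : TwoHop.Feasible N E1 E2 p1 p2 a1 a2 d1 d2 :=
      ⟨fun i hi => (hnn i hi).2.2, fun i hi => (hfeas i hi).1, fun i hi => (hfeas i hi).2⟩
    obtain ⟨d1', d2', ⟨hd', hF1, hF2⟩, hproc⟩ := hF.exists_procrastinating hE
      (fun i hi => ⟨(hnn i hi).1, (hnn i hi).2.1⟩) ha2.1 (mul_le_one₀ ha1.2 ha2.1 ha2.2)
    exact ⟨p1, p2, d1', d2', fun i hi => ⟨(hnn i hi).1, (hnn i hi).2.1, hd' i hi⟩,
      fun i hi => ⟨hF1 i hi, hF2 i hi⟩,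
      fun i hi => ⟨sub_nonneg.2 (hproc i hi).1, sub_nonneg.2 (hproc i hi).2⟩, rfl⟩
  · rintro ⟨p1, p2, d1, d2, hnn, hfeas, -, rfl⟩
    exact ⟨p1, p2, d1, d2, hnn, hfeas, rfl⟩
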